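/- There exists a universal constant C > 0 such that for every integer k ≥ 1, ∑_{i=0}^{k-1} ( [k+2]_4 / ( [i+2]_4 · [k−i]_2 · [k−i−2] ) )^2 ≤ C [k−1]^2. -/

import Mathlib

/-!
Put `a = i + 1` and `j = k - i`. The bracket is monotone, so `[m - q + 1]^q ≤ [m]_q ≤ [m]^q`, and
`[m] ≥ (m + c) / (c + 1)` for `c ≥ 0`; hence the `i`-th coefficient is `O(k^4 / (a^4 j^3))`, because
`[k-i]_2 [k-i-2] = [k-i]_3`. As `k ≤ a + j`, this is `O(k (a^{-3} + j^{-3}))`. After squaring, both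
`∑ a^{-6}` and `∑ j^{-6}` (the latter a reflection of the former) are bounded by `∑ n^{-6} < ∞`, so
the sum is `O(k^2)`, and `k ≤ 2 [k-1]`.
-/

/-- `br m = max m 1`, the bracket convention `[m]` from the paper, as a real number. -/
noncomputable def br (m : ℤ) : ℝ := max (m : ℝ) 1

/-- `brf m k = [m]_k = [m]·[m-1]⋯[m-k+1]`, the modified falling factorial;
in particular `brf m 2 = [m][m-1]` and `brf m 4 = [m][m-1][m-2][m-3]`. -/
noncomputable def brf (m : ℤ) (k : ℕ) : ℝ := ∏ i ∈ Finset.range k, br (m - i)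

lemma one_le_br (m : ℤ) : 1 ≤ br m := le_max_right _ _

lemma br_pos (m : ℤ) : 0 < br m := one_pos.trans_le (one_le_br m)

lemma br_of_one_le {m : ℤ} (hm : 1 ≤ m) : br m = m := max_eq_left (by exact_mod_cast hm)

lemma br_mono : Monotone br := fun _ _ h => max_le_max (by exact_mod_cast h) le_rfl

lemma add_div_add_one_le_br (m : ℤ) {a : ℝ} (ha : 0 ≤ a) : (m + a) / (a + 1) ≤ br m := by
  rw [div_le_iff₀ (by positivity)]
  rcases le_total (m : ℝ) 1 with hm | hm
  · rw [br, max_eq_right hm]; linarith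
  · rw [br, max_eq_left hm]; nlinarith

lemma brf_succ (m : ℤ) (q : ℕ) : brf m (q + 1) = brf m q * br (m - q) :=
  Finset.prod_range_succ _ _

lemma brf_pos (m : ℤ) (q : ℕ) : 0 < brf m q := Finset.prod_pos fun _ _ => br_pos _

lemma brf_le_br_pow (m : ℤ) (q : ℕ) : brf m q ≤ br m ^ q := by
  calc brf m q ≤ ∏ _i ∈ Finset.range q, br m :=
        Finset.prod_le_prod (fun i _ => (br_pos _).le) fun i _ => br_mono (by omega)
    _ = br m ^ q := by rw [Finset.prod_const, Finset.card_range]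

lemma br_pow_le_brf (m : ℤ) (q : ℕ) : br (m - q + 1) ^ q ≤ brf m q := by
  calc br (m - q + 1) ^ q = ∏ _i ∈ Finset.range q, br (m - q + 1) := by
        rw [Finset.prod_const, Finset.card_range]
    _ ≤ brf m q := Finset.prod_le_prod (fun i _ => (br_pos _).le) fun i hi =>
        br_mono (by have := Finset.mem_range.mp hi; omega)

lemma pow_four_div_le_of_le_add {a j k : ℝ} (ha : 1 ≤ a) (hj : 0 < j) (hk : 0 ≤ k)
    (hkaj : k ≤ a + j) :
    k ^ 4 / (a ^ 4 * j ^ 3) ≤ 4 * k * (1 / a ^ 3 + 1 / j ^ 3) := by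
  have hcube : (a + j) ^ 3 ≤ 4 * (a ^ 3 + j ^ 3) := by nlinarith [sq_nonneg (a - j)]
  have : k ^ 4 ≤ 4 * k * (a ^ 4 + a * j ^ 3) := by
    calc k ^ 4 ≤ k * (a + j) ^ 3 := by
          rw [pow_succ' k 3]; gcongr
      _ ≤ k * (4 * (a ^ 3 + j ^ 3)) := by gcongr
      _ ≤ 4 * k * (a ^ 4 + a * j ^ 3) := by
          have : a ^ 3 ≤ a ^ 4 := pow_le_pow_right₀ ha (by norm_num)
          nlinarith [mul_le_mul_of_nonneg_right ha (pow_nonneg hj.le 3)]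
  have ha0 : 0 < a := one_pos.trans_le ha
  rw [div_le_iff₀ (by positivity)]
  refine this.trans_eq ?_
  field_simp
  ring

lemma commutator_coefficient_le {k i : ℕ} (hik : i < k) :
    brf ((k : ℤ) + 2) 4 / (brf ((i : ℤ) + 2) 4 * brf ((k : ℤ) - i) 2 * br ((k : ℤ) - i - 2))
      ≤ 3 ^ 11 * (4 * k * (1 / ((i : ℝ) + 1) ^ 3 + 1 / (((k - 1 - i : ℕ) : ℝ) + 1) ^ 3)) := by
  have hk : (1 : ℝ) ≤ k := by exact_mod_cast Nat.one_le_of_lt hik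
  have hki : (0 : ℝ) < k - i := sub_pos.mpr (by exact_mod_cast hik)
  have hreflect : ((k - 1 - i : ℕ) : ℝ) + 1 = k - i := by
    rw [Nat.cast_sub (by omega), Nat.cast_sub (by omega)]
    ring
  rw [hreflect]
  have hnum : brf ((k : ℤ) + 2) 4 ≤ (3 * k) ^ 4 :=
    calc brf ((k : ℤ) + 2) 4 ≤ br ((k : ℤ) + 2) ^ 4 := brf_le_br_pow _ _
      _ = ((k : ℝ) + 2) ^ 4 := by rw [br_of_one_le (by omega)]; push_cast; rfl
      _ ≤ (3 * k) ^ 4 := by gcongr; linarith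
  have hden₁ : (((i : ℝ) + 1) / 3) ^ 4 ≤ brf ((i : ℤ) + 2) 4 :=
    calc (((i : ℝ) + 1) / 3) ^ 4 ≤ br ((i : ℤ) + 2 - (4 : ℕ) + 1) ^ 4 := by
          have := add_div_add_one_le_br ((i : ℤ) + 2 - (4 : ℕ) + 1) zero_le_two
          push_cast at this ⊢
          gcongr
          linarith
      _ ≤ brf ((i : ℤ) + 2) 4 := br_pow_le_brf _ _
  have hden₂ : (((k : ℝ) - i) / 3) ^ 3 ≤ brf ((k : ℤ) - i) 2 * br ((k : ℤ) - i - 2) :=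
    calc (((k : ℝ) - i) / 3) ^ 3 ≤ br ((k : ℤ) - i - (3 : ℕ) + 1) ^ 3 := by
          have := add_div_add_one_le_br ((k : ℤ) - i - (3 : ℕ) + 1) zero_le_two
          push_cast at this ⊢
          gcongr
          linarith
      _ ≤ brf ((k : ℤ) - i) 3 := br_pow_le_brf _ _
      _ = brf ((k : ℤ) - i) 2 * br ((k : ℤ) - i - 2) := by rw [brf_succ]; push_cast; rfl
  calc brf ((k : ℤ) + 2) 4 / (brf ((i : ℤ) + 2) 4 * brf ((k : ℤ) - i) 2 * br ((k : ℤ) - i - 2))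
      ≤ (3 * k) ^ 4 / ((((i : ℝ) + 1) / 3) ^ 4 * (((k : ℝ) - i) / 3) ^ 3) := by
        rw [mul_assoc]
        gcongr
        exact (brf_pos _ _).le
    _ = 3 ^ 11 * (k ^ 4 / (((i : ℝ) + 1) ^ 4 * ((k : ℝ) - i) ^ 3)) := by
        field_simp
    _ ≤ 3 ^ 11 * (4 * k * (1 / ((i : ℝ) + 1) ^ 3 + 1 / ((k : ℝ) - i) ^ 3)) := by
        gcongr
        exact pow_four_div_le_of_le_add (le_add_of_nonneg_left i.cast_nonneg) hki (by positivity)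
          (by linarith)

lemma summable_sq_one_div_succ_pow_three : Summable fun n : ℕ => (1 / ((n : ℝ) + 1) ^ 3) ^ 2 := by
  refine ((summable_nat_add_iff 1).mpr (Real.summable_one_div_nat_pow.mpr
    (by norm_num : 1 < 6))).congr fun n => ?_
  simp only [div_pow, one_pow, ← pow_mul]
  push_cast
  rfl

lemma sum_range_sq_add_reflect_le (f : ℕ → ℝ) (hf : Summable fun n => f n ^ 2) (k : ℕ) :
    ∑ i ∈ Finset.range k, (f i + f (k - 1 - i)) ^ 2 ≤ 4 * ∑' n, f n ^ 2 := by
  have hpartial : ∑ i ∈ Finset.range k, f i ^ 2 ≤ ∑' n, f n ^ 2 :=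
    hf.sum_le_tsum _ fun i _ => sq_nonneg (f i)
  calc ∑ i ∈ Finset.range k, (f i + f (k - 1 - i)) ^ 2
      ≤ ∑ i ∈ Finset.range k, 2 * (f i ^ 2 + f (k - 1 - i) ^ 2) :=
        Finset.sum_le_sum fun i _ => add_sq_le
    _ = 2 * (∑ i ∈ Finset.range k, f i ^ 2 + ∑ i ∈ Finset.range k, f i ^ 2) := by
        rw [← Finset.mul_sum, Finset.sum_add_distrib, Finset.sum_range_reflect (fun i => f i ^ 2)]
    _ ≤ 4 * ∑' n, f n ^ 2 := by linarith

/-- there is a universal constant `C > 0` such that for every `k ≥ 1`,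
`∑_{i=0}^{k-1} ([k+2]_4 / ([i+2]_4 [k-i]_2 [k-i-2]))² ≤ C [k-1]²`. -/
theorem commutator_coefficient_sum_bound :
    ∃ C : ℝ, 0 < C ∧ ∀ k : ℕ, 1 ≤ k →
      ∑ i ∈ Finset.range k,
        (brf ((k : ℤ) + 2) 4 /
          (brf ((i : ℤ) + 2) 4 * brf ((k : ℤ) - i) 2 * br ((k : ℤ) - i - 2))) ^ 2
        ≤ C * br ((k : ℤ) - 1) ^ 2 := by
  set f : ℕ → ℝ := fun n => 1 / ((n : ℝ) + 1) ^ 3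
  have hf : Summable fun n => f n ^ 2 := summable_sq_one_div_succ_pow_three
  have hS : 0 < ∑' n, f n ^ 2 := hf.tsum_pos (fun n => sq_nonneg _) 0 (by norm_num [f])
  refine ⟨(3 ^ 11 * 8) ^ 2 * (4 * ∑' n, f n ^ 2), by positivity, fun k hk => ?_⟩
  have hk₂ : (k : ℝ) ≤ 2 * br ((k : ℤ) - 1) := by
    have := add_div_add_one_le_br ((k : ℤ) - 1) zero_le_one
    push_cast at this
    linarith
  calc _ ≤ ∑ i ∈ Finset.range k, (3 ^ 11 * (4 * k * (f i + f (k - 1 - i)))) ^ 2 :=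
        Finset.sum_le_sum fun i hi => pow_le_pow_left₀ (div_nonneg (brf_pos _ _).le
          (mul_pos (mul_pos (brf_pos _ _) (brf_pos _ _)) (br_pos _)).le)
          (commutator_coefficient_le (Finset.mem_range.mp hi)) 2
    _ = (3 ^ 11 * 4 * k) ^ 2 * ∑ i ∈ Finset.range k, (f i + f (k - 1 - i)) ^ 2 := by
        rw [Finset.mul_sum]
        exact Finset.sum_congr rfl fun i _ => by ring
    _ ≤ (3 ^ 11 * 4 * (2 * br ((k : ℤ) - 1))) ^ 2 * (4 * ∑' n, f n ^ 2) := by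
        gcongr
        exact sum_range_sq_add_reflect_le f hf k
    _ = _ := by ring
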